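/- arXiv:1406.0886 — 6 statements merged into one kernel-verified Lean document; each statement's English description precedes it below -/
import Mathlib

section
/- Let K be a characteristic zero field and let P, F ∈ K[y]((x^{-1})) be such that the leading (1,0)-homogeneous part of P is x^n (n ≥ 1), deg_x(F) ≤ 1−n, and [P,F] := ∂_x P ∂_y F − ∂_y P ∂_x F lies in K^×. Then the leading coefficient F_{1-n} of F (the coefficient of x^{1-n}) has the form μ_0 + μ_1 y with μ_0, μ_1 ∈ K and μ_1 ≠ 0. -/
open Polynomial HahnSeries Finset

noncomputable section

/-- The support of a Laurent series (in `x⁻¹`) is bounded below. -/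
theorem LaurentSeries.bddBelow_support {R : Type*} [CommRing R] (f : LaurentSeries R) :
    BddBelow (Function.support f.coeff) := by
  rcases (Function.support f.coeff).eq_empty_or_nonempty with h | h
  · simp [h]
  · exact ⟨f.isWF_support.min h, fun x hx => f.isWF_support.min_le h hx⟩

/-- Build a Laurent series from a coefficient function with support bounded below. -/
theorem isPWO_of_bddBelow {s : Set ℤ} (h : BddBelow s) : s.IsPWO :=
  Set.IsWF.isPWO h.wellFoundedOn_lt

/-- Formal derivative with respect to `x` on `K[y]((x⁻¹))`, where the Hahn series
variable `t` corresponds to `x⁻¹`, so the coefficient of `x^k` is `f.coeff (-k)`. -/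
def lsDx {R : Type*} [CommRing R] (f : LaurentSeries R) : LaurentSeries R where
  coeff j := (1 - j) • f.coeff (j - 1)
  isPWO_support' := by
    obtain ⟨b, hb⟩ := LaurentSeries.bddBelow_support f
    refine isPWO_of_bddBelow ⟨b + 1, ?_⟩
    intro j hj
    have h1 : f.coeff (j - 1) ≠ 0 := by
      intro h; apply hj; simp [Function.mem_support, h]
    have := hb h1
    omega

/-- Coefficientwise derivative with respect to `y` on `K[y]((x⁻¹))`. -/
def lsDy {K : Type*} [CommRing K] (f : LaurentSeries (Polynomial K)) :
    LaurentSeries (Polynomial K) where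
  coeff j := Polynomial.derivative (f.coeff j)
  isPWO_support' := by
    refine f.isPWO_support.mono ?_
    intro j hj
    simp only [Function.mem_support, HahnSeries.mem_support] at *
    exact fun h => hj (by rw [h]; simp)

/-- The Jacobian `∂ₓP ∂_y F − ∂_y P ∂ₓ F` on `K[y]((x⁻¹))`. -/
def lsJac {K : Type*} [CommRing K] (P F : LaurentSeries (Polynomial K)) :
    LaurentSeries (Polynomial K) :=
  lsDx P * lsDy F - lsDy P * lsDx F

lemma hahn_mul_coeff_min {R : Type*} [CommRing R] (a b : HahnSeries ℤ R) (i0 j0 : ℤ)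
    (ha : ∀ i < i0, a.coeff i = 0) (hb : ∀ j < j0, b.coeff j = 0) :
    (a * b).coeff (i0 + j0) = a.coeff i0 * b.coeff j0 := by
  rw [HahnSeries.coeff_mul]
  apply Finset.sum_eq_single (i0, j0)
  · intro ij hij hne
    rw [Finset.mem_addAntidiagonal] at hij
    obtain ⟨h1s, h2s, hsum⟩ := hij
    rcases lt_trichotomy ij.1 i0 with h | h | h
    · rw [ha _ h, zero_mul]
    · exact absurd (Prod.ext h (by omega)) hne
    · rw [hb _ (by omega), mul_zero]
  · intro h
    rw [Finset.mem_addAntidiagonal] at h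
    by_cases h1 : a.coeff i0 = 0
    · rw [h1, zero_mul]
    by_cases h2 : b.coeff j0 = 0
    · rw [h2, mul_zero]
    exact absurd ⟨h1, h2, rfl⟩ h


/-- Let `K` be a characteristic zero field and `P, F ∈ K[y]((x⁻¹))`
such that the leading `(1,0)`-homogeneous part of `P` is `x^n` (`n ≥ 1`),
`deg_x F ≤ 1 − n`, and `[P,F] = ∂ₓP ∂_y F − ∂_y P ∂ₓF ∈ K^×`.  Then the
coefficient of `x^{1-n}` in `F` has the form `μ₀ + μ₁ y` with `μ₁ ≠ 0`.

Here the coefficient of `x^k` in a Laurent series `f` is `f.coeff (-k)`. -/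
theorem statement1 (K : Type*) [Field K] [CharZero K] (n : ℕ) (hn : 1 ≤ n)
    (P F : LaurentSeries (Polynomial K))
    (hPn : P.coeff (-(n : ℤ)) = 1)
    (hPtop : ∀ j : ℤ, j < -(n : ℤ) → P.coeff j = 0)
    (hF : ∀ j : ℤ, j < (n : ℤ) - 1 → F.coeff j = 0)
    (hJac : ∃ c : K, c ≠ 0 ∧ lsJac P F = HahnSeries.single 0 (Polynomial.C c)) :
    ∃ μ₀ μ₁ : K, μ₁ ≠ 0 ∧
      F.coeff ((n : ℤ) - 1) = Polynomial.C μ₀ + Polynomial.C μ₁ * Polynomial.X := by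
  obtain ⟨c, hc, hJ⟩ := hJac
  set p := F.coeff ((n : ℤ) - 1) with hp
  have key : (lsJac P F).coeff 0 = Polynomial.C c := by rw [hJ]; simp
  have h1 : (lsDx P * lsDy F).coeff 0
      = (lsDx P).coeff (1 - (n : ℤ)) * (lsDy F).coeff ((n : ℤ) - 1) := by
    have h := hahn_mul_coeff_min (lsDx P) (lsDy F) (1 - (n : ℤ)) ((n : ℤ) - 1)
      (fun i hi => by
        show ((1 : ℤ) - i) • P.coeff (i - 1) = 0
        rw [hPtop _ (by omega), smul_zero])
      (fun j hj => by
        show Polynomial.derivative (F.coeff j) = 0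
        rw [hF _ (by omega)]; simp)
    rwa [show (1 - (n:ℤ)) + ((n:ℤ) - 1) = 0 by ring] at h
  have h2 : (lsDy P * lsDx F).coeff 0 = 0 := by
    have h := hahn_mul_coeff_min (lsDy P) (lsDx F) (1 - (n : ℤ)) ((n : ℤ) - 1)
      (fun i hi => by
        show Polynomial.derivative (P.coeff i) = 0
        rcases eq_or_lt_of_le (show i ≤ -(n:ℤ) by omega) with h' | h'
        · rw [h', hPn]; simp
        · rw [hPtop _ h']; simp)
      (fun j hj => by
        show ((1 : ℤ) - j) • F.coeff (j - 1) = 0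
        rw [hF _ (by omega), smul_zero])
    rw [show (1 - (n:ℤ)) + ((n:ℤ) - 1) = 0 by ring] at h
    rw [h]
    have : (lsDx F).coeff ((n:ℤ) - 1) = 0 := by
      show ((1 : ℤ) - ((n:ℤ) - 1)) • F.coeff ((n:ℤ) - 1 - 1) = 0
      rw [hF _ (by omega), smul_zero]
    rw [this, mul_zero]
  have hDxP : (lsDx P).coeff (1 - (n : ℤ)) = Polynomial.C (n : K) := by
    show ((1 : ℤ) - (1 - (n:ℤ))) • P.coeff ((1 - (n:ℤ)) - 1) = _
    rw [show (1 : ℤ) - (1 - (n:ℤ)) = (n:ℤ) by ring, show (1 - (n:ℤ)) - 1 = -(n:ℤ) by ring,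
      hPn]
    simp [zsmul_eq_mul]
  have hkey2 : Polynomial.C (n : K) * Polynomial.derivative p = Polynomial.C c := by
    have : (lsJac P F).coeff 0 = (lsDx P * lsDy F).coeff 0 - (lsDy P * lsDx F).coeff 0 := by
      simp [lsJac]
    rw [this, h1, h2, hDxP, sub_zero] at key
    exact key
  have hn0 : (n : K) ≠ 0 := Nat.cast_ne_zero.mpr (by omega)
  have hd : Polynomial.derivative p = Polynomial.C ((n : K)⁻¹ * c) := by
    calc Polynomial.derivative p
        = Polynomial.C ((n:K)⁻¹) * (Polynomial.C (n:K) * Polynomial.derivative p) := by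
          rw [← mul_assoc, ← Polynomial.C_mul, inv_mul_cancel₀ hn0, Polynomial.C_1, one_mul]
      _ = Polynomial.C ((n:K)⁻¹) * Polynomial.C c := by rw [hkey2]
      _ = Polynomial.C ((n:K)⁻¹ * c) := by rw [Polynomial.C_mul]
  have hdeg : p.natDegree ≤ 1 := by
    rw [Polynomial.natDegree_le_iff_coeff_eq_zero]
    intro m hm
    have h0 := congrArg (fun q => Polynomial.coeff q (m - 1)) hd
    simp only [Polynomial.coeff_derivative, Polynomial.coeff_C] at h0
    rw [if_neg (by omega), show m - 1 + 1 = m by omega] at h0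
    have hm0 : ((m - 1 : ℕ) : K) + 1 ≠ 0 := Nat.cast_add_one_ne_zero _
    rcases mul_eq_zero.mp h0 with h' | h'
    · exact h'
    · exact absurd h' hm0
  have hpe := Polynomial.eq_X_add_C_of_natDegree_le_one hdeg
  refine ⟨p.coeff 0, p.coeff 1, ?_, ?_⟩
  · have : p.coeff 1 = (n : K)⁻¹ * c := by
      have := congrArg (fun q => Polynomial.coeff q 0) hd
      simpa [Polynomial.coeff_derivative] using this
    rw [this]
    exact mul_ne_zero (inv_ne_zero hn0) hc
  · conv_lhs => rw [hpe]
    ring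


end
end

section
/- Let K be a field of characteristic zero, n, m > 1 integers, and suppose n | m or m | n. Then there exist no monic polynomials p, q ∈ K[x] with deg p = n, deg q = m satisfying m p' q − n p q' = c for any c ∈ K^×. -/
/-!
Write `m = n k`. The pair `(p, p ^ k)` has vanishing homogeneous Jacobian, and the Jacobian is
linear in its second argument, so `s = q - p ^ k` satisfies `m p' s - n p s' = c` as well.
Since `c ≠ 0`, `s ≠ 0`, and `d = deg s < m` because `q` and `p ^ k` are both monic of
degree `m`.
The coefficient of `X ^ (n + d - 1)` in `m p' s - n p s'` is `n (m - d) lc(s) ≠ 0`, and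
`n + d - 1 > 0` because `n > 1`, so the Jacobian cannot be constant.
The case `m ∣ n` follows by swapping `p` and `q`, which only negates the Jacobian.
-/

open Polynomial

namespace Polynomial

variable {R : Type*} [CommRing R]

noncomputable def homJacobian (m n : ℕ) (p q : R[X]) : R[X] :=
  (m : R[X]) * derivative p * q - (n : R[X]) * p * derivative q

lemma homJacobian_sub_right (m n : ℕ) (p q r : R[X]) :
    homJacobian m n p (q - r) = homJacobian m n p q - homJacobian m n p r := by
  simp only [homJacobian, derivative_sub]
  ring

@[simp]
lemma homJacobian_zero_right (m n : ℕ) (p : R[X]) : homJacobian m n p 0 = 0 := by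
  simp [homJacobian]

lemma homJacobian_swap (m n : ℕ) (p q : R[X]) :
    homJacobian n m q p = -homJacobian m n p q := by
  simp only [homJacobian]
  ring

lemma homJacobian_pow_self (n k : ℕ) (p : R[X]) : homJacobian (n * k) n p (p ^ k) = 0 := by
  cases k with
  | zero => simp [homJacobian]
  | succ k =>
    simp only [homJacobian, derivative_pow, C_eq_natCast, Nat.add_sub_cancel]
    push_cast
    ring

lemma coeff_derivative_mul_natDegree_add_natDegree_sub_one (p q : R[X]) :
    (derivative p * q).coeff (p.natDegree + q.natDegree - 1) =
      p.natDegree * p.leadingCoeff * q.leadingCoeff := by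
  rcases Nat.eq_zero_or_pos p.natDegree with h | h
  · simp [derivative_of_natDegree_zero h, h]
  · rw [show p.natDegree + q.natDegree - 1 = (p.natDegree - 1) + q.natDegree by omega,
      coeff_mul_add_eq_of_natDegree_le (natDegree_derivative_le p) le_rfl, coeff_derivative,
      Nat.sub_add_cancel h, Nat.cast_sub h]
    simp only [leadingCoeff, Nat.cast_one, sub_add_cancel]
    ring

lemma coeff_homJacobian_natDegree_add_natDegree_sub_one (m n : ℕ) (p q : R[X]) :
    (homJacobian m n p q).coeff (p.natDegree + q.natDegree - 1) =
      (m * p.natDegree - n * q.natDegree) * p.leadingCoeff * q.leadingCoeff := by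
  have h : homJacobian m n p q =
      C (m : R) * (derivative p * q) - C (n : R) * (derivative q * p) := by
    simp only [homJacobian, C_eq_natCast]
    ring
  rw [h, coeff_sub, coeff_C_mul, coeff_C_mul,
    coeff_derivative_mul_natDegree_add_natDegree_sub_one, add_comm p.natDegree,
    coeff_derivative_mul_natDegree_add_natDegree_sub_one]
  ring

theorem homJacobian_ne_C [IsDomain R] [CharZero R] {n k : ℕ} (hn : 1 < n) {p q : R[X]}
    (hp : IsMonicOfDegree p n) (hq : IsMonicOfDegree q (n * k)) {c : R} (hc : c ≠ 0) :
    homJacobian (n * k) n p q ≠ C c := by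
  intro h
  set s := q - p ^ k
  have hs : homJacobian (n * k) n p s = C c := by
    rw [homJacobian_sub_right, homJacobian_pow_self, sub_zero, h]
  have hs0 : s ≠ 0 := by
    intro hs0
    rw [hs0, homJacobian_zero_right] at hs
    exact hc (C_eq_zero.mp hs.symm)
  have hdeg : s.natDegree < n * k := by
    have hpk := hp.pow k
    have := degree_sub_lt_left (p := q) (q := p ^ k)
      (by rw [degree_eq_natDegree hq.monic.ne_zero, degree_eq_natDegree hpk.monic.ne_zero,
        hq.natDegree_eq, hpk.natDegree_eq]) hq.monic.ne_zero
      (by rw [hq.monic.leadingCoeff, hpk.monic.leadingCoeff])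
    simpa [hq.natDegree_eq] using natDegree_lt_natDegree hs0 this
  have hcoeff := congrArg (coeff · (p.natDegree + s.natDegree - 1)) hs
  rw [coeff_homJacobian_natDegree_add_natDegree_sub_one, coeff_C,
    if_neg (by rw [hp.natDegree_eq]; omega), hp.monic.leadingCoeff, hp.natDegree_eq] at hcoeff
  have hprod : ((n * (n * k - s.natDegree) : ℕ) : R) * s.leadingCoeff = 0 := by
    push_cast [Nat.cast_sub hdeg.le] at hcoeff ⊢
    linear_combination hcoeff
  rcases mul_eq_zero.mp hprod with h | h
  · have : n * (n * k - s.natDegree) ≠ 0 := Nat.mul_ne_zero (by omega) (by omega)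
    exact this (Nat.cast_eq_zero.mp h)
  · exact hs0 (leadingCoeff_eq_zero.mp h)

end Polynomial

/-- Let `K` be a field of characteristic zero, `n, m > 1` integers,
and suppose `n ∣ m` or `m ∣ n`.  Then there exist no monic polynomials
`p, q ∈ K[x]` with `deg p = n`, `deg q = m` satisfying `m p' q − n p q' = c`
for any `c ∈ K^×`. -/
theorem statement4 (K : Type*) [Field K] [CharZero K] (n m : ℕ)
    (hn : 1 < n) (hm : 1 < m) (hdvd : n ∣ m ∨ m ∣ n) :
    ¬ ∃ (p q : Polynomial K) (c : K), p.Monic ∧ q.Monic ∧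
      p.natDegree = n ∧ q.natDegree = m ∧ c ≠ 0 ∧
      (m : Polynomial K) * p.derivative * q - (n : Polynomial K) * p * q.derivative =
        Polynomial.C c := by
  rintro ⟨p, q, c, hp, hq, hpn, hqm, hc, heq⟩
  have hp' : IsMonicOfDegree p n := ⟨hpn, hp⟩
  have hq' : IsMonicOfDegree q m := ⟨hqm, hq⟩
  rcases hdvd with ⟨k, rfl⟩ | ⟨k, rfl⟩
  · exact homJacobian_ne_C hn hp' hq' hc heq
  · refine homJacobian_ne_C hm hq' hp' (neg_ne_zero.2 hc) ?_
    rw [homJacobian_swap, map_neg, neg_inj]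
    exact heq
end

section
/- Let K be a field of characteristic zero, n, m ≥ 1, and let p, q ∈ K[x] be monic of degrees n and m respectively. Then m p' q − n p q' = λ̃ for a constant λ̃ = nλ(1−m−n) with λ ∈ K^× if and only if p^m − q^n = nλ x^{mn−m−n+1} + (terms of degree < mn−m−n+1). -/
/-!
Put `F = p^m - q^n`. Differentiating gives `F' q - n F q' = p^(m-1) (m p' q - n p q')`.
The operator `H ↦ H' q - n H q'` raises the degree `d` of `H` by `m - 1` and multiplies its
leading coefficient by `d - nm`, which is nonzero for `H = F` since `deg F < mn`. As `p^(m-1)` is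
monic of degree `n(m-1)`, `m p' q - n p q'` is the constant `c` exactly when `F' q - n F q'` has
degree `n(m-1)` and leading coefficient `c`, i.e. when `F` has degree `(m-1)(n-1)` and leading
coefficient `c / ((m-1)(n-1) - nm) = nλ`.
-/

open Polynomial

namespace Polynomial

section CommRing

variable {R : Type*} [CommRing R]

/-- `q ^ (a + 1) * (H / q ^ a)'`, the numerator of the derivative of `H / q ^ a`. -/
noncomputable def twistedWronskian (a : R) (H q : R[X]) : R[X] :=
  derivative H * q - C a * H * derivative q

@[simp]
theorem twistedWronskian_zero_left (a : R) (q : R[X]) : twistedWronskian a 0 q = 0 := by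
  simp [twistedWronskian]

theorem natDegree_derivative_le_of_natDegree_le {H : R[X]} {d : ℕ} (hH : H.natDegree ≤ d + 1) :
    (derivative H).natDegree ≤ d :=
  (natDegree_derivative_le H).trans (by omega)

theorem coeff_derivative_mul_of_natDegree_le {H q : R[X]} {d m : ℕ} (hH : H.natDegree ≤ d)
    (hq : q.natDegree ≤ m + 1) :
    (derivative H * q).coeff (d + m) = d * H.coeff d * q.coeff (m + 1) := by
  rcases d with _ | d
  · simp [derivative_of_natDegree_zero (Nat.le_zero.mp hH)]
  · rw [show d + 1 + m = d + (m + 1) by omega,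
      coeff_mul_add_eq_of_natDegree_le (natDegree_derivative_le_of_natDegree_le hH) hq,
      coeff_derivative]
    push_cast
    ring

theorem natDegree_twistedWronskian_le (a : R) {H q : R[X]} {d m : ℕ} (hH : H.natDegree ≤ d)
    (hq : q.natDegree ≤ m + 1) : (twistedWronskian a H q).natDegree ≤ d + m := by
  refine (natDegree_sub_le _ _).trans (max_le ?_ ?_)
  · rcases d with _ | d
    · simp [derivative_of_natDegree_zero (Nat.le_zero.mp hH)]
    · exact natDegree_mul_le.trans (by
        have := natDegree_derivative_le_of_natDegree_le hH; omega)
  · refine natDegree_mul_le.trans (add_le_add ((natDegree_C_mul_le _ _).trans hH)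
      (natDegree_derivative_le_of_natDegree_le hq))

theorem coeff_twistedWronskian (a : R) {H q : R[X]} {d m : ℕ} (hH : H.natDegree ≤ d)
    (hq : q.natDegree ≤ m + 1) :
    (twistedWronskian a H q).coeff (d + m) = (d - a * (m + 1)) * H.coeff d * q.coeff (m + 1) := by
  rw [twistedWronskian, coeff_sub, coeff_derivative_mul_of_natDegree_le hH hq,
    coeff_mul_add_eq_of_natDegree_le ((natDegree_C_mul_le _ _).trans hH)
      (natDegree_derivative_le_of_natDegree_le hq), coeff_C_mul, coeff_derivative]
  ring

theorem twistedWronskian_pow_sub_pow (p q : R[X]) (m n : ℕ) :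
    twistedWronskian (n : R) (p ^ (m + 1) - q ^ n) q =
      p ^ m * (((m + 1 : ℕ) : R[X]) * derivative p * q - (n : R[X]) * p * derivative q) := by
  rcases n with _ | n
  · simp [twistedWronskian, derivative_pow_succ]; ring
  · simp only [twistedWronskian, derivative_sub, derivative_pow_succ, map_add, map_one,
      map_natCast]
    push_cast
    ring

end CommRing

section Semiring

variable {R : Type*} [Semiring R]

theorem Monic.natDegree_mul_eq_and_leadingCoeff_mul_eq_iff {P W : R[X]} (hP : P.Monic) {c : R}
    (hc : c ≠ 0) :
    (P * W).natDegree = P.natDegree ∧ (P * W).leadingCoeff = c ↔ W = C c := by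
  rw [leadingCoeff_monic_mul hP]
  constructor
  · rintro ⟨hdeg, hlc⟩
    have hW : W ≠ 0 := by rintro rfl; exact hc (by simpa using hlc.symm)
    rw [hP.natDegree_mul' hW, add_eq_left] at hdeg
    rw [← hlc, ← Polynomial.coeff_natDegree, hdeg]
    exact eq_C_of_natDegree_eq_zero hdeg
  · rintro rfl
    simp [hP.natDegree_mul' (C_ne_zero.mpr hc)]

end Semiring

theorem degree_sub_C_mul_X_pow_lt_iff {R : Type*} [Ring R] {F : R[X]} {c : R} (hc : c ≠ 0)
    (D : ℕ) :
    (F - C c * X ^ D).degree < (D : WithBot ℕ) ↔ F.natDegree = D ∧ F.leadingCoeff = c := by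
  have hg : (C c * X ^ D).degree = (D : WithBot ℕ) := degree_C_mul_X_pow D hc
  constructor
  · intro h
    have hF : F = C c * X ^ D + (F - C c * X ^ D) := by abel
    have hlt : (F - C c * X ^ D).degree < (C c * X ^ D).degree := hg ▸ h
    rw [hF, natDegree_add_eq_left_of_degree_lt hlt, leadingCoeff_add_of_degree_lt' hlt]
    exact ⟨natDegree_eq_of_degree_eq_some hg, leadingCoeff_C_mul_X_pow c D⟩
  · rintro ⟨hdeg, hlc⟩
    have hF : F ≠ 0 := by rintro rfl; exact hc (by simpa using hlc.symm)
    have hFdeg : F.degree = (D : WithBot ℕ) := by rw [degree_eq_natDegree hF, hdeg]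
    exact hFdeg ▸ degree_sub_lt_left (hFdeg.trans hg.symm) hF
      (by rw [hlc, leadingCoeff_C_mul_X_pow])

section Domain

variable {R : Type*} [CommRing R] [IsDomain R] {a : R} {H q : R[X]} {m : ℕ}

theorem natDegree_twistedWronskian_and_leadingCoeff (hq : q.Monic) (hqm : q.natDegree = m + 1)
    (hH : H ≠ 0) (hd : (H.natDegree : R) ≠ a * (m + 1)) :
    (twistedWronskian a H q).natDegree = H.natDegree + m ∧
      (twistedWronskian a H q).leadingCoeff = (H.natDegree - a * (m + 1)) * H.leadingCoeff := by
  have hcoeff := coeff_twistedWronskian a (H := H) le_rfl hqm.le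
  rw [← hqm, hq.coeff_natDegree, mul_one, coeff_natDegree] at hcoeff
  have hdeg : (twistedWronskian a H q).natDegree = H.natDegree + m :=
    natDegree_eq_of_le_of_coeff_ne_zero (natDegree_twistedWronskian_le a le_rfl hqm.le)
      (hcoeff ▸ mul_ne_zero (sub_ne_zero.mpr hd) (leadingCoeff_ne_zero.mpr hH))
  exact ⟨hdeg, by rw [leadingCoeff, hdeg, hcoeff]⟩

theorem natDegree_twistedWronskian_and_leadingCoeff_iff (hq : q.Monic)
    (hqm : q.natDegree = m + 1) (hH : H ≠ 0 → (H.natDegree : R) ≠ a * (m + 1)) {d : ℕ}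
    (hd : (d : R) ≠ a * (m + 1)) {b : R} (hb : b ≠ 0) :
    (twistedWronskian a H q).natDegree = d + m ∧
        (twistedWronskian a H q).leadingCoeff = (d - a * (m + 1)) * b ↔
      H.natDegree = d ∧ H.leadingCoeff = b := by
  constructor
  · rintro ⟨hdeg, hlc⟩
    have hH0 : H ≠ 0 := by
      rintro rfl
      exact mul_ne_zero (sub_ne_zero.mpr hd) hb (by simpa using hlc.symm)
    obtain ⟨hdeg', hlc'⟩ := natDegree_twistedWronskian_and_leadingCoeff hq hqm hH0 (hH hH0)
    have hHd : H.natDegree = d := by omega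
    rw [hlc', hHd] at hlc
    exact ⟨hHd, mul_left_cancel₀ (sub_ne_zero.mpr hd) hlc⟩
  · rintro ⟨rfl, rfl⟩
    exact natDegree_twistedWronskian_and_leadingCoeff hq hqm (leadingCoeff_ne_zero.mp hb) hd

end Domain

end Polynomial

/-- Let `K` be a field of characteristic zero, `n, m ≥ 1`, and
`p, q ∈ K[x]` monic of degrees `n` and `m`.  Then `m p' q − n p q' = λ̃` with
`λ̃ = nλ(1−m−n)`, `λ ∈ K^×`, if and only if
`p^m − q^n = nλ x^{mn−m−n+1} + (terms of degree < mn−m−n+1)`.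
Note `mn − m − n + 1 = (m-1)(n-1)`. -/
theorem statement5 (K : Type*) [Field K] [CharZero K] (n m : ℕ)
    (hn : 1 ≤ n) (hm : 1 ≤ m) (p q : Polynomial K)
    (hp : p.Monic) (hq : q.Monic) (hpn : p.natDegree = n) (hqm : q.natDegree = m)
    (lam : K) (hlam : lam ≠ 0) :
    (m : Polynomial K) * p.derivative * q - (n : Polynomial K) * p * q.derivative =
        Polynomial.C ((n : K) * lam * (1 - (m : K) - (n : K))) ↔
      (p ^ m - q ^ n - Polynomial.C ((n : K) * lam) * Polynomial.X ^ ((m - 1) * (n - 1))).degree <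
        (((m - 1) * (n - 1) : ℕ) : WithBot ℕ) := by
  obtain ⟨k, rfl⟩ : ∃ k, m = k + 1 := ⟨m - 1, by omega⟩
  rw [Nat.add_sub_cancel]
  have hnlam : (n : K) * lam ≠ 0 := mul_ne_zero (Nat.cast_ne_zero.mpr (by omega)) hlam
  have hc : (n : K) * lam * (1 - ((k + 1 : ℕ) : K) - n) ≠ 0 := by
    have h : (1 : K) - ((k + 1 : ℕ) : K) - n = -((k + n : ℕ) : K) := by push_cast; ring
    exact mul_ne_zero hnlam (h ▸ neg_ne_zero.mpr (Nat.cast_ne_zero.mpr (by omega)))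
  have hdeg : k * (n - 1) + k = k * n := by
    obtain ⟨n, rfl⟩ : ∃ n', n = n' + 1 := ⟨n - 1, by omega⟩
    simp only [Nat.add_sub_cancel]
    ring
  have hlc : ((k * (n - 1) : ℕ) : K) - n * (k + 1) = 1 - ((k + 1 : ℕ) : K) - n := by
    push_cast [Nat.cast_sub hn]
    ring
  have hdK : ((k * (n - 1) : ℕ) : K) ≠ n * (k + 1) := by
    rw [← sub_ne_zero, hlc]
    exact right_ne_zero_of_mul hc
  have hF : p ^ (k + 1) - q ^ n ≠ 0 → ((p ^ (k + 1) - q ^ n).natDegree : K) ≠ n * (k + 1) := by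
    intro _ h
    have hlt := (IsMonicOfDegree.pow ⟨hpn, hp⟩ (k + 1)).natDegree_sub_lt (by positivity)
      (mul_comm (k + 1) n ▸ IsMonicOfDegree.pow ⟨hqm, hq⟩ n)
    exact hlt.ne (by exact_mod_cast h)
  set W := ((k + 1 : ℕ) : K[X]) * derivative p * q - (n : K[X]) * p * derivative q
  calc W = C ((n : K) * lam * (1 - ((k + 1 : ℕ) : K) - n))
      ↔ (p ^ k * W).natDegree = (p ^ k).natDegree ∧
          (p ^ k * W).leadingCoeff = (n : K) * lam * (1 - ((k + 1 : ℕ) : K) - n) :=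
        ((hp.pow k).natDegree_mul_eq_and_leadingCoeff_mul_eq_iff hc).symm
    _ ↔ (twistedWronskian (n : K) (p ^ (k + 1) - q ^ n) q).natDegree = k * (n - 1) + k ∧
        (twistedWronskian (n : K) (p ^ (k + 1) - q ^ n) q).leadingCoeff =
          (((k * (n - 1) : ℕ) : K) - n * (k + 1)) * (n * lam) := by
      rw [← twistedWronskian_pow_sub_pow, natDegree_pow, hpn, hdeg, hlc, mul_comm _ (n * lam)]
    _ ↔ _ := natDegree_twistedWronskian_and_leadingCoeff_iff hq hqm hF hdK hnlam
    _ ↔ _ := (degree_sub_C_mul_X_pow_lt_iff hnlam _).symm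
end

section
/- Let K be an algebraically closed field of characteristic zero, let p, q ∈ K[x] be monic of degrees n and m, write p = ∏_{i=1}^n (x−α_i), q = ∏_{j=1}^m (x−β_j), and set g := pq. If m p' q − n p q' = λ̃ with λ̃ ∈ K^×, then g is separable, m g'(α_i) = λ̃ for every root α_i of p, and n g'(β_j) = −λ̃ for every root β_j of q. -/
open Polynomial Finset

noncomputable section

/-- Let `K` be algebraically closed of characteristic zero,
`p = ∏ (x−α_i)`, `q = ∏ (x−β_j)` monic of degrees `n, m`, and `g = pq`.
If `m p' q − n p q' = λ̃` with `λ̃ ∈ K^×`, then `g` is separable,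
`m g'(α_i) = λ̃` for every root of `p`, and `n g'(β_j) = −λ̃` for every root of `q`. -/
theorem statement7 (K : Type*) [Field K] [IsAlgClosed K] [CharZero K] (n m : ℕ)
    (α : Fin n → K) (β : Fin m → K) (p q g : Polynomial K)
    (hp : p = ∏ i : Fin n, (Polynomial.X - Polynomial.C (α i)))
    (hq : q = ∏ j : Fin m, (Polynomial.X - Polynomial.C (β j)))
    (hg : g = p * q) (lamt : K) (hlamt : lamt ≠ 0)
    (heq : (m : Polynomial K) * p.derivative * q - (n : Polynomial K) * p * q.derivative =
      Polynomial.C lamt) :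
    g.Separable ∧
    (∀ i : Fin n, (m : K) * g.derivative.eval (α i) = lamt) ∧
    (∀ j : Fin m, (n : K) * g.derivative.eval (β j) = -lamt) := by
  -- evaluated version of heq
  have heval : ∀ x : K, (m : K) * p.derivative.eval x * q.eval x -
      (n : K) * p.eval x * q.derivative.eval x = lamt := by
    intro x
    have := congrArg (Polynomial.eval x) heq
    simpa using this
  have hgd : g.derivative = p.derivative * q + p * q.derivative := by
    rw [hg, derivative_mul]
  -- m ≠ 0 and n ≠ 0
  have hm : (m : K) ≠ 0 := by
    intro h
    have hm0 : m = 0 := by exact_mod_cast h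
    subst hm0
    have hq1 : q = 1 := by simp [hq]
    have h0 : (0 : Polynomial K) = Polynomial.C lamt := by
      simpa [hq1] using heq
    exact hlamt (by simpa using h0.symm)
  have hn : (n : K) ≠ 0 := by
    intro h
    have hn0 : n = 0 := by exact_mod_cast h
    subst hn0
    have hp1 : p = 1 := by simp [hp]
    have h0 : (0 : Polynomial K) = Polynomial.C lamt := by
      simpa [hp1] using heq
    exact hlamt (by simpa using h0.symm)
  -- values at roots
  have hα : ∀ i : Fin n, p.eval (α i) = 0 := by
    intro i; rw [hp]; simp [Polynomial.eval_prod, Finset.prod_eq_zero (Finset.mem_univ i)]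
  have hβ : ∀ j : Fin m, q.eval (β j) = 0 := by
    intro j; rw [hq]; simp [Polynomial.eval_prod, Finset.prod_eq_zero (Finset.mem_univ j)]
  have key1 : ∀ i : Fin n, (m : K) * g.derivative.eval (α i) = lamt := by
    intro i
    have h1 := heval (α i)
    rw [hα i] at h1
    rw [hgd]
    simp only [Polynomial.eval_add, Polynomial.eval_mul, hα i]
    linear_combination h1
  have key2 : ∀ j : Fin m, (n : K) * g.derivative.eval (β j) = -lamt := by
    intro j
    have h1 := heval (β j)
    rw [hβ j] at h1
    rw [hgd]
    simp only [Polynomial.eval_add, Polynomial.eval_mul, hβ j]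
    linear_combination -h1
  refine ⟨?_, key1, key2⟩
  rw [Polynomial.Separable]
  refine (Polynomial.isCoprime_iff_aeval_ne_zero_of_isAlgClosed (k := K) K _ _).mpr ?_
  intro x
  by_contra hcon
  push_neg at hcon
  obtain ⟨h1, h2⟩ := hcon
  have hgx : g.eval x = 0 := by simpa [Polynomial.aeval_def, Polynomial.eval₂_eq_eval_map] using h1
  have hgdx : g.derivative.eval x = 0 := by simpa [Polynomial.aeval_def, Polynomial.eval₂_eq_eval_map] using h2
  have hpq : p.eval x = 0 ∨ q.eval x = 0 := by
    rw [hg, Polynomial.eval_mul] at hgx; exact mul_eq_zero.mp hgx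
  have hx := heval x
  have hgd' : p.derivative.eval x * q.eval x + p.eval x * q.derivative.eval x = 0 := by
    have h3 := congrArg (Polynomial.eval x) hgd
    rw [hgdx] at h3
    simpa using h3.symm
  rcases hpq with h | h
  · refine hlamt ?_
    linear_combination -hx + (m:K) * hgd' - ((m:K)+(n:K)) * q.derivative.eval x * h
  · refine hlamt ?_
    linear_combination -hx - (n:K) * hgd' + ((m:K)+(n:K)) * p.derivative.eval x * h

end
end

section
/- Let D be a commutative K-algebra, n ≥ 1, and let C = x + C_{-1}x^{-1} + C_{-2}x^{-2} + ⋯ ∈ D((x^{-1})). For every j ≥ 0, the coefficient (C^n)_{-m-j} equals n·C_{-m-n-j+1} plus a polynomial expression (with integer coefficients) in C_{-1}, …, C_{-m-n-j+2} only. Consequently, given arbitrary C_{-1}, …, C_{-m-n+2} ∈ D satisfying (C^n)_{-k} = 0 for k = 1, …, m−1, there exist unique C_{-m-n+1}, C_{-m-n}, … ∈ D such that (C^n)_{-k} = 0 for all k ≥ 1 with k ≤ m−1+j for every j (i.e., C^n has no negative-degree terms up to any prescribed order). -/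
/-!
If `C` and `C'` both start with `x` and agree below `x^{-(r+n-1)}`, then
`C^n - C'^n = (C - C') · ∑ Cⁱ C'^{n-1-i}` and the second factor starts with `n xⁿ⁻¹`, so
`(C^n)_{-r} - (C'^n)_{-r} = n (C_{-(r+n-1)} - C'_{-(r+n-1)})`. Comparing `C` with its truncation
below `x^{-(r+n-1)}`, whose powers have coefficients in the ring generated by `C₋₁, …, C_{-(r+n-2)}`,
gives the polynomial expression. As `n` is invertible, the same identity determines
`C_{-(r+n-1)}` from the condition `(C^n)_{-r} = 0`, which gives existence and uniqueness.
-/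

open HahnSeries Finset

namespace HahnSeries

section OrderTop

variable {Γ R : Type*} [AddCommMonoid Γ] [LinearOrder Γ] [IsOrderedCancelAddMonoid Γ]

theorem coeff_mul_of_le_orderTop [NonUnitalNonAssocSemiring R] {x y : R⟦Γ⟧} {a b : Γ}
    (ha : (a : WithTop Γ) ≤ x.orderTop) (hb : (b : WithTop Γ) ≤ y.orderTop) :
    (x * y).coeff (a + b) = x.coeff a * y.coeff b := by
  rw [le_orderTop_iff_forall] at ha hb
  rw [coeff_mul]
  refine Finset.sum_eq_single (a, b) (fun ij hij hne => ?_) (fun h => ?_)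
  · obtain ⟨i, j⟩ := ij
    have hsum : i + j = a + b := (Finset.mem_antidiagonal.mp hij).2.2
    rcases lt_or_ge i a with hi | hi
    · rw [ha i (WithTop.coe_lt_coe.mpr hi), zero_mul]
    · have hj : j < b := by
        by_contra! hj
        rcases hi.lt_or_eq with hi | rfl
        · exact (add_lt_add_of_lt_of_le hi hj).ne' hsum
        · exact hne (Prod.ext rfl (add_left_cancel hsum))
      rw [hb j (WithTop.coe_lt_coe.mpr hj), mul_zero]
  · simp only [Finset.mem_antidiagonal, mem_support, and_true, not_and_or, not_not] at h
    rcases h with h | h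
    · rw [h, zero_mul]
    · rw [h, mul_zero]

theorem le_orderTop_pow [Semiring R] {x : R⟦Γ⟧} {a : Γ} (ha : (a : WithTop Γ) ≤ x.orderTop)
    (n : ℕ) : ((n • a : Γ) : WithTop Γ) ≤ (x ^ n).orderTop :=
  (WithTop.coe_nsmul a n ▸ nsmul_le_nsmul_right ha n).trans orderTop_nsmul_le_orderTop_pow

theorem coeff_pow_of_le_orderTop [Semiring R] {x : R⟦Γ⟧} {a : Γ}
    (ha : (a : WithTop Γ) ≤ x.orderTop) (n : ℕ) :
    (x ^ n).coeff (n • a) = x.coeff a ^ n := by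
  induction n with
  | zero => simp
  | succ n ih =>
    rw [pow_succ, succ_nsmul, coeff_mul_of_le_orderTop (le_orderTop_pow ha n) ha, ih, pow_succ]

theorem coeff_pow_sub_pow_of_le_orderTop [CommRing R] {x y : R⟦Γ⟧} {g b : Γ}
    (hx : (g : WithTop Γ) ≤ x.orderTop) (hy : (g : WithTop Γ) ≤ y.orderTop)
    (hxy : x.coeff g = y.coeff g) (hb : (b : WithTop Γ) ≤ (x - y).orderTop) (n : ℕ) :
    (x ^ (n + 1) - y ^ (n + 1)).coeff (n • g + b) =
      (n + 1) • (x.coeff g ^ n * (x - y).coeff b) := by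
  set S := ∑ i ∈ range (n + 1), x ^ i * y ^ (n - i)
  have hterm : ∀ i ∈ range (n + 1), (x ^ i * y ^ (n - i)).coeff (n • g) = x.coeff g ^ n ∧
      ((n • g : Γ) : WithTop Γ) ≤ (x ^ i * y ^ (n - i)).orderTop := by
    intro i hi
    have hin : i + (n - i) = n := Nat.add_sub_cancel' (Nat.lt_succ_iff.mp (mem_range.mp hi))
    have hn : n • g = i • g + (n - i) • g := by rw [← add_nsmul, hin]
    have hxi := le_orderTop_pow hx i
    have hyi := le_orderTop_pow hy (n - i)
    refine ⟨?_, ?_⟩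
    · rw [hn, coeff_mul_of_le_orderTop hxi hyi, coeff_pow_of_le_orderTop hx,
        coeff_pow_of_le_orderTop hy, ← hxy]
      exact (_root_.pow_add _ _ _).symm.trans (congrArg _ hin)
    · rw [hn, WithTop.coe_add]
      exact (add_le_add hxi hyi).trans orderTop_add_le_mul
  have hS : ((n • g : Γ) : WithTop Γ) ≤ S.orderTop := by
    rw [le_orderTop_iff_forall]
    intro j hj
    rw [coeff_sum]
    exact sum_eq_zero fun i hi => coeff_eq_zero_of_lt_orderTop (hj.trans_le (hterm i hi).2)
  have hSg : S.coeff (n • g) = (n + 1) • x.coeff g ^ n := by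
    rw [coeff_sum, sum_congr rfl fun i hi => (hterm i hi).1, sum_const, card_range]
  have hgeom : x ^ (n + 1) - y ^ (n + 1) = S * (x - y) := by
    rw [← geom_sum₂_mul]; simp [S]
  rw [hgeom, coeff_mul_of_le_orderTop hS hb, hSg, smul_mul_assoc]

end OrderTop

section Subsemiring

variable {Γ R σ : Type*} [AddCommMonoid Γ] [PartialOrder Γ] [IsOrderedCancelAddMonoid Γ]
  [Semiring R] [SetLike σ R] [SubsemiringClass σ R] {S : σ}

theorem coeff_mul_mem {x y : R⟦Γ⟧} (hx : ∀ i, x.coeff i ∈ S) (hy : ∀ i, y.coeff i ∈ S) (i : Γ) :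
    (x * y).coeff i ∈ S := by
  rw [coeff_mul]
  exact sum_mem fun ij _ => mul_mem (hx _) (hy _)

theorem coeff_pow_mem {x : R⟦Γ⟧} (hx : ∀ i, x.coeff i ∈ S) (n : ℕ) (i : Γ) :
    (x ^ n).coeff i ∈ S := by
  induction n generalizing i with
  | zero =>
    rw [pow_zero, coeff_one]
    split_ifs
    exacts [one_mem S, zero_mem S]
  | succ n ih => exact pow_succ x n ▸ coeff_mul_mem ih hx i

end Subsemiring

end HahnSeries

namespace LaurentSeries

variable {D : Type*} [CommRing D]

theorem coeff_pow_sub_pow {C C' : LaurentSeries D} (hC : ∀ i < -1, C.coeff i = 0)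
    (h1 : C.coeff (-1) = 1) {n : ℕ} {r : ℤ} (hrn : 0 ≤ r + n - 1)
    (hagree : ∀ i < r + n - 1, C'.coeff i = C.coeff i) :
    (C ^ n - C' ^ n).coeff r = n • (C - C').coeff (r + n - 1) := by
  have hle : ∀ {x : LaurentSeries D} {a : ℤ}, (∀ i < a, x.coeff i = 0) →
      ((a : ℤ) : WithTop ℤ) ≤ x.orderTop := fun h =>
    le_orderTop_iff_forall.mpr fun i hi => h i (WithTop.coe_lt_coe.mp hi)
  obtain _ | p := n
  · simp
  have hC' : ∀ i < -1, C'.coeff i = 0 := fun i hi => (hagree i (by omega)).trans (hC i hi)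
  have key := coeff_pow_sub_pow_of_le_orderTop (hle hC) (hle hC') (hagree (-1) (by omega)).symm
    (b := r + p) (hle fun i hi => by rw [HahnSeries.coeff_sub, hagree i (by omega), sub_self]) p
  convert key using 2
  · simp
  · rw [h1, one_pow, one_mul]
    congr 2
    push_cast
    ring

theorem exists_mvPolynomial_coeff_pow {C : LaurentSeries D} (hC : ∀ i < -1, C.coeff i = 0)
    (h1 : C.coeff (-1) = 1) (h0 : C.coeff 0 = 0) (n N : ℕ) :
    ∃ H : MvPolynomial (Fin N) ℤ, (C ^ n).coeff ((N : ℤ) + 2 - n) =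
      n • C.coeff ((N : ℤ) + 1) + MvPolynomial.aeval (fun i : Fin N => C.coeff ((i : ℤ) + 1)) H := by
  set T := truncLT ((N : ℤ) + 1) C
  set v : Fin N → D := fun i => C.coeff ((i : ℤ) + 1)
  have hT : ∀ i, T.coeff i ∈ Algebra.adjoin ℤ (Set.range v) := by
    intro i
    rw [HahnSeries.coeff_truncLT]
    split_ifs with hi
    · obtain hlt | rfl | rfl | hpos : i < -1 ∨ i = -1 ∨ i = 0 ∨ 0 < i := by omega
      · rw [hC i hlt]; exact zero_mem _
      · rw [h1]; exact one_mem _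
      · rw [h0]; exact zero_mem _
      · refine Algebra.subset_adjoin ⟨⟨(i - 1).toNat, by omega⟩, ?_⟩
        simp only [v]
        congr 1
        omega
    · exact zero_mem _
  obtain ⟨H, hH⟩ : ∃ H, MvPolynomial.aeval v H = (T ^ n).coeff ((N : ℤ) + 2 - n) :=
    Algebra.adjoin_range_eq_range_aeval ℤ v ▸ coeff_pow_mem hT n _
  refine ⟨H, ?_⟩
  have key := coeff_pow_sub_pow hC h1 (C' := T) (r := (N : ℤ) + 2 - n) (n := n) (by omega)
    fun i hi => by rw [HahnSeries.coeff_truncLT, if_pos (by omega)]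
  rw [HahnSeries.coeff_sub, HahnSeries.coeff_sub, HahnSeries.coeff_truncLT,
    if_neg (by omega), sub_zero] at key
  rw [hH, ← sub_eq_iff_eq_add, key]
  congr 2
  ring

theorem eq_of_coeff_pow_eq {C C' : LaurentSeries D} (hC : ∀ i < -1, C.coeff i = 0)
    (h1 : C.coeff (-1) = 1) {n : ℕ} (hn : IsUnit (n : D)) {t : ℤ} (ht : 0 ≤ t)
    (hagree : ∀ i < t, C'.coeff i = C.coeff i)
    (hpow : ∀ r, t ≤ r + n - 1 → (C ^ n).coeff r = (C' ^ n).coeff r) : C = C' := by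
  have hbelow : ∀ k : ℕ, ∀ i < t + k, C'.coeff i = C.coeff i := by
    intro k
    induction k with
    | zero => simpa using hagree
    | succ k ih =>
      intro i hi
      rcases lt_or_eq_of_le (Int.le_of_lt_add_one (by push_cast at hi; omega : i < t + k + 1))
        with hi | rfl
      · exact ih i hi
      have key := coeff_pow_sub_pow hC h1 (n := n) (r := t + k - n + 1) (by omega)
        fun j hj => ih j (by omega)
      rw [HahnSeries.coeff_sub, hpow (t + k - n + 1) (by omega), sub_self, nsmul_eq_mul,
        HahnSeries.coeff_sub, show t + k - n + 1 + n - 1 = t + k by ring] at key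
      exact (sub_eq_zero.mp (hn.mul_right_eq_zero.mp key.symm)).symm
  ext i
  exact (hbelow (i - t + 1).toNat i (by omega)).symm

/-- The series `x + ∑_{k ≥ 1} d k x⁻ᵏ`: the coefficient `C_{-k}` sits at index `k`, and `d 0` is
ignored. -/
def ofCoeffs (d : ℕ → D) : LaurentSeries D :=
  ofSuppBddBelow (fun t => if t = -1 then 1 else if 0 < t then d t.toNat else 0) ⟨-1, fun t ht => by
    by_contra h
    exact ht (by simp only [if_neg (show t ≠ -1 by omega), if_neg (show ¬0 < t by omega)])⟩

theorem coeff_ofCoeffs (d : ℕ → D) (t : ℤ) :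
    (ofCoeffs d).coeff t = if t = -1 then 1 else if 0 < t then d t.toNat else 0 :=
  rfl

theorem coeff_ofCoeffs_of_lt_neg_one (d : ℕ → D) {i : ℤ} (hi : i < -1) :
    (ofCoeffs d).coeff i = 0 := by
  simp [coeff_ofCoeffs, hi.ne, hi.trans (by norm_num : (-1 : ℤ) < 0) |>.not_gt]

theorem coeff_ofCoeffs_neg_one (d : ℕ → D) : (ofCoeffs d).coeff (-1) = 1 := by
  simp [coeff_ofCoeffs]

theorem coeff_ofCoeffs_zero (d : ℕ → D) : (ofCoeffs d).coeff 0 = 0 := by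
  simp [coeff_ofCoeffs]

theorem coeff_ofCoeffs_natCast (d : ℕ → D) {k : ℕ} (hk : 0 < k) : (ofCoeffs d).coeff k = d k := by
  simp [coeff_ofCoeffs, hk]

theorem coeff_ofCoeffs_congr {d d' : ℕ → D} {t : ℤ} (h : ∀ k : ℕ, 0 < k → (k : ℤ) < t → d k = d' k)
    {i : ℤ} (hi : i < t) : (ofCoeffs d).coeff i = (ofCoeffs d').coeff i := by
  simp only [coeff_ofCoeffs]
  split_ifs
  · rfl
  · exact h _ (by omega) (by omega)
  · rfl

theorem eq_ofCoeffs {C : LaurentSeries D} (hC : ∀ i < -1, C.coeff i = 0) (h1 : C.coeff (-1) = 1)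
    (h0 : C.coeff 0 = 0) : C = ofCoeffs fun k => C.coeff k := by
  ext i
  rw [coeff_ofCoeffs]
  split_ifs with hi hpos
  · rw [hi, h1]
  · rw [Int.toNat_of_nonneg hpos.le]
  · obtain hlt | rfl : i < -1 ∨ i = 0 := by omega
    exacts [hC i hlt, h0]

theorem truncLT_ofCoeffs (d : ℕ → D) (t : ℕ) :
    truncLT (t : ℤ) (ofCoeffs d) = ofCoeffs fun i => if i < t then d i else 0 := by
  ext i
  simp only [HahnSeries.coeff_truncLT, coeff_ofCoeffs]
  split_ifs <;> first | rfl | omega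

theorem truncLT_ofCoeffs_eq_sum (d : ℕ → D) (N : ℕ) :
    truncLT ((N : ℤ) + 1) (ofCoeffs d) =
      single (-1 : ℤ) (1 : D) + ∑ i ∈ Icc 1 N, single (i : ℤ) (d i) := by
  ext t
  rw [HahnSeries.coeff_truncLT, coeff_ofCoeffs, HahnSeries.coeff_add, HahnSeries.coeff_sum]
  rcases lt_or_ge 0 t with hpos | hle
  · lift t to ℕ using hpos.le
    simp only [coeff_single, Nat.cast_inj, Int.toNat_natCast, sum_ite_eq, mem_Icc]
    split_ifs <;> first | omega | simp_all
  · rw [sum_eq_zero fun i hi => coeff_single_of_ne (by simp only [mem_Icc] at hi; omega)]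
    simp only [coeff_single, add_zero]
    split_ifs <;> first | omega | rfl

/-- Beyond `N`, `C_{-t}` is the unique value making `(C^n)_{-(t-n+1)}` vanish, by
`coeff_pow_sub_pow` applied to `C` and its truncation below `t`. -/
noncomputable def rootCoeff (n N : ℕ) (c : ℕ → D) (t : ℕ) : D :=
  if t ≤ N then c t
  else -(Ring.inverse (n : D) *
    ((ofCoeffs fun i => if _ : i < t then rootCoeff n N c i else 0) ^ n).coeff ((t : ℤ) - n + 1))

theorem rootCoeff_of_le {n N : ℕ} (c : ℕ → D) {t : ℕ} (ht : t ≤ N) : rootCoeff n N c t = c t := by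
  rw [rootCoeff, if_pos ht]

theorem rootCoeff_of_lt {n N : ℕ} (c : ℕ → D) {t : ℕ} (ht : N < t) :
    rootCoeff n N c t = -(Ring.inverse (n : D) *
      (truncLT (t : ℤ) (ofCoeffs (rootCoeff n N c)) ^ n).coeff ((t : ℤ) - n + 1)) := by
  rw [rootCoeff, if_neg (by omega), truncLT_ofCoeffs]
  rfl

theorem coeff_pow_ofCoeffs_rootCoeff {n N : ℕ} (hn : IsUnit (n : D)) (c : ℕ → D)
    (hc : ∀ r : ℤ, 0 < r → r + n - 1 ≤ N → (truncLT ((N : ℤ) + 1) (ofCoeffs c) ^ n).coeff r = 0)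
    {r : ℤ} (hr : 0 < r) : (ofCoeffs (rootCoeff n N c) ^ n).coeff r = 0 := by
  set C := ofCoeffs (rootCoeff n N c)
  have hC : ∀ i < -1, C.coeff i = 0 := fun i hi => coeff_ofCoeffs_of_lt_neg_one _ hi
  have h1 : C.coeff (-1) = 1 := coeff_ofCoeffs_neg_one _
  rcases le_or_gt (r + n - 1) N with hsmall | hbig
  · have hagree : ∀ i : ℤ, i ≤ N → (truncLT ((N : ℤ) + 1) (ofCoeffs c)).coeff i = C.coeff i :=
      fun i hi => by
        rw [HahnSeries.coeff_truncLT, if_pos (by omega)]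
        exact coeff_ofCoeffs_congr (t := N + 1)
          (fun k _ hk => (rootCoeff_of_le c (by omega)).symm) (by omega)
    have key := coeff_pow_sub_pow hC h1 (n := n) (r := r) (by omega) fun i hi => hagree i (by omega)
    rwa [HahnSeries.coeff_sub, HahnSeries.coeff_sub, hagree _ hsmall, sub_self, smul_zero,
      hc r hr hsmall, sub_zero] at key
  · obtain ⟨t, ht⟩ : ∃ t : ℕ, (t : ℤ) = r + n - 1 := ⟨(r + n - 1).toNat, by omega⟩
    have key := coeff_pow_sub_pow hC h1 (C' := truncLT (t : ℤ) C) (n := n) (r := r) (by omega)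
      fun i hi => by rw [HahnSeries.coeff_truncLT, if_pos (by omega)]
    rw [HahnSeries.coeff_sub, HahnSeries.coeff_sub, ← ht, HahnSeries.coeff_truncLT, if_neg
      (lt_irrefl _), sub_zero, coeff_ofCoeffs_natCast _ (by omega), rootCoeff_of_lt c (by omega),
      show (t : ℤ) - n + 1 = r by omega, smul_neg, nsmul_eq_mul, ← mul_assoc,
      Ring.mul_inverse_cancel _ hn, one_mul] at key
    linear_combination key

end LaurentSeries

open LaurentSeries

/-- Let `D` be a commutative `K`-algebra and
`C = x + C₋₁x⁻¹ + ⋯ ∈ D((x⁻¹))`.  (1) For every `j ≥ 0` the coefficient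
`(C^n)_{-m-j}` equals `n·C_{-m-n-j+1}` plus an integer polynomial expression in
`C₋₁, …, C_{-m-n-j+2}` only.  (2) Given `C₋₁, …, C_{-m-n+2} ∈ D` satisfying
`(C^n)_{-k} = 0` for `k = 1, …, m−1`, there exist unique
`C_{-m-n+1}, C_{-m-n}, … ∈ D` extending them to a series `C` with
`(C^n)_{-k} = 0` for all `k ≥ 1`.  The coefficient of `x^k` of a Hahn series
is its coefficient at index `-k`, so `C_{-k}` is `C.coeff k`. -/
theorem statement12 (K : Type*) [Field K] [CharZero K]
    (D : Type*) [CommRing D] [Algebra K D] (n m : ℕ) (hn : 1 ≤ n) (hm : 1 ≤ m) :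
    (∀ C : LaurentSeries D,
      C.coeff (-1) = 1 → C.coeff 0 = 0 → (∀ i : ℤ, i < -1 → C.coeff i = 0) →
      ∀ j : ℕ, ∃ H : MvPolynomial (Fin (m + n + j - 2)) ℤ,
        (C ^ n).coeff ((m : ℤ) + j) =
          n • C.coeff ((m : ℤ) + n + j - 1) +
            MvPolynomial.aeval (fun i : Fin (m + n + j - 2) => C.coeff ((i : ℤ) + 1)) H)
    ∧
    (∀ c : ℕ → D,
      (∀ k : ℕ, 1 ≤ k → k ≤ m - 1 →
        ((HahnSeries.single (-1 : ℤ) (1 : D) +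
            ∑ i ∈ Finset.Icc 1 (m + n - 2), HahnSeries.single (i : ℤ) (c i)) ^ n).coeff
          (k : ℤ) = 0) →
      ∃! C : LaurentSeries D,
        C.coeff (-1) = 1 ∧ (∀ i : ℤ, i < -1 → C.coeff i = 0) ∧ C.coeff 0 = 0 ∧
        (∀ k : ℕ, 1 ≤ k → k ≤ m + n - 2 → C.coeff (k : ℤ) = c k) ∧
        (∀ k : ℤ, 1 ≤ k → (C ^ n).coeff k = 0)) := by
  have hnD : IsUnit (n : D) := by
    simpa using (IsUnit.mk0 (n : K) (Nat.cast_ne_zero.mpr (by omega))).map (algebraMap K D)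
  refine ⟨fun C h1 h0 hC j => ?_, fun c hc => ?_⟩
  · obtain ⟨H, hH⟩ := exists_mvPolynomial_coeff_pow hC h1 h0 n (m + n + j - 2)
    rw [show ((m + n + j - 2 : ℕ) : ℤ) + 2 - n = m + j by omega,
      show ((m + n + j - 2 : ℕ) : ℤ) + 1 = m + n + j - 1 by omega] at hH
    exact ⟨H, hH⟩
  set N := m + n - 2
  rw [← truncLT_ofCoeffs_eq_sum] at hc
  set C := ofCoeffs (rootCoeff n N c)
  have hc_int : ∀ r : ℤ, 0 < r → r + n - 1 ≤ N →
      (truncLT ((N : ℤ) + 1) (ofCoeffs c) ^ n).coeff r = 0 := fun r hr hrN => by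
    simpa [show (r.toNat : ℤ) = r by omega] using hc r.toNat (by omega) (by omega)
  have hpow : ∀ r : ℤ, 0 < r → (C ^ n).coeff r = 0 := fun r hr =>
    coeff_pow_ofCoeffs_rootCoeff hnD c hc_int hr
  refine ⟨C, ⟨coeff_ofCoeffs_neg_one _, fun i hi => coeff_ofCoeffs_of_lt_neg_one _ hi,
    coeff_ofCoeffs_zero _, fun k hk hkN => by
      rw [coeff_ofCoeffs_natCast _ hk, rootCoeff_of_le c hkN], hpow⟩, ?_⟩
  rintro C' ⟨h1', hC', h0', hc', hpow'⟩
  refine (eq_of_coeff_pow_eq (C' := C') (fun i hi => coeff_ofCoeffs_of_lt_neg_one _ hi)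
    (coeff_ofCoeffs_neg_one _) hnD (t := m + n - 1) (by omega) (fun i hi => ?_)
    fun r hr => by rw [hpow r (by omega), hpow' r (by omega)]).symm
  rw [eq_ofCoeffs hC' h1' h0']
  exact coeff_ofCoeffs_congr (fun k hk hkt =>
    (hc' k hk (by omega)).trans (rootCoeff_of_le c (by omega)).symm) hi
end

section
/- Let K be a characteristic zero field, n, m ≥ 2, and let p, q ∈ K[x] be monic of degrees n and m with m p' q − n p q' = λ̃ ∈ K^×, and suppose m = nk for some k ∈ ℕ. Setting q̄ := q − p^k, one has m p' q̄ − n p q̄' = λ̃; moreover if q̄ = a_r x^r + lower terms with a_r ≠ 0 and 0 ≤ r < m, the leading term of m p' q̄ − n p q̄' is n a_r (m − r) x^{n+r-1}, contradicting n + r − 1 > 0; hence no such pair (p,q) exists. -/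
open Polynomial

/-!
When `m = n k`, the power `p ^ k` solves the homogeneous equation `m p' y - n p y' = 0`,
since `p (p ^ k)' = k p ^ k p'`. Hence `q̄ = q - p ^ k` still satisfies `m p' q̄ - n p q̄' = λ̃`,
and `q̄ ≠ 0`. As `q` and `p ^ k` are monic of degree `m`, `q̄` has degree `r < m`. In degree
`n + r - 1` the left-hand side has coefficient `n (m - r) lc(q̄) ≠ 0`, while the right-hand side
is a nonzero constant; this is impossible because `n + r - 1 ≥ 1`.
-/

namespace Polynomial

theorem Monic.natDegree_sub_lt {R : Type*} [Ring R] [Nontrivial R] {p q : R[X]} (hp : p.Monic)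
    (hq : q.Monic) (hpq : p.natDegree = q.natDegree) (hne : p - q ≠ 0) :
    (p - q).natDegree < p.natDegree := by
  refine natDegree_lt_natDegree hne (degree_sub_lt_left ?_ hp.ne_zero ?_)
  · rw [degree_eq_natDegree hp.ne_zero, degree_eq_natDegree hq.ne_zero, hpq]
  · rw [hp.leadingCoeff, hq.leadingCoeff]

section CommRing

variable {R : Type*} [CommRing R]

theorem mul_derivative_pow (p : R[X]) (k : ℕ) :
    p * derivative (p ^ k) = k * p ^ k * derivative p := by
  cases k with
  | zero => simp
  | succ k => rw [derivative_pow_succ, ← Nat.cast_succ, C_eq_natCast]; ring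

theorem natDegree_mul_derivative_le (p f : R[X]) :
    (p * derivative f).natDegree ≤ p.natDegree + f.natDegree - 1 := by
  rcases Nat.eq_zero_or_pos f.natDegree with hf | hf
  · simp [derivative_of_natDegree_zero hf]
  · exact natDegree_mul_le.trans (by have := natDegree_derivative_le f; omega)

theorem coeff_mul_derivative_natDegree_add_natDegree_sub_one (p f : R[X]) :
    (p * derivative f).coeff (p.natDegree + f.natDegree - 1) =
      f.natDegree * (p.leadingCoeff * f.leadingCoeff) := by
  rcases Nat.eq_zero_or_pos f.natDegree with hf | hf
  · simp [derivative_of_natDegree_zero hf, hf]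
  · obtain ⟨r, hr⟩ : ∃ r, f.natDegree = r + 1 := ⟨_, (Nat.succ_pred_eq_of_pos hf).symm⟩
    have hdf : (derivative f).natDegree ≤ r := (natDegree_derivative_le f).trans (by omega)
    rw [show p.natDegree + f.natDegree - 1 = p.natDegree + r by omega,
      coeff_mul_add_eq_of_natDegree_le le_rfl hdf, coeff_derivative, ← hr]
    simp only [leadingCoeff, hr, Nat.cast_succ]
    ring

noncomputable def weightedWronskian (m n : ℕ) (p q : R[X]) : R[X] :=
  m * derivative p * q - n * p * derivative q

@[simp]
theorem weightedWronskian_zero_right (m n : ℕ) (p : R[X]) :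
    weightedWronskian m n p 0 = 0 := by
  simp [weightedWronskian]

theorem weightedWronskian_sub_pow {m n k : ℕ} (hk : m = n * k) (p q : R[X]) :
    weightedWronskian m n p (q - p ^ k) = weightedWronskian m n p q := by
  have h := mul_derivative_pow p k
  simp only [weightedWronskian, derivative_sub, hk, Nat.cast_mul]
  linear_combination (n : R[X]) * h

theorem natDegree_weightedWronskian_le (m n : ℕ) (p f : R[X]) :
    (weightedWronskian m n p f).natDegree ≤ p.natDegree + f.natDegree - 1 := by
  have h₁ := natDegree_mul_derivative_le f p
  have h₂ := natDegree_mul_derivative_le p f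
  rw [add_comm f.natDegree] at h₁
  simp only [weightedWronskian, mul_assoc, mul_comm (derivative p), ← C_eq_natCast]
  exact (natDegree_sub_le_of_le ((natDegree_C_mul_le _ _).trans h₁)
    ((natDegree_C_mul_le _ _).trans h₂)).trans (max_self _).le

theorem coeff_weightedWronskian (m n : ℕ) (p f : R[X]) :
    (weightedWronskian m n p f).coeff (p.natDegree + f.natDegree - 1) =
      (m * p.natDegree - n * f.natDegree) * p.leadingCoeff * f.leadingCoeff := by
  have h₁ := coeff_mul_derivative_natDegree_add_natDegree_sub_one f p
  have h₂ := coeff_mul_derivative_natDegree_add_natDegree_sub_one p f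
  rw [add_comm f.natDegree] at h₁
  simp only [weightedWronskian, mul_assoc, coeff_sub, coeff_natCast_mul,
    mul_comm (derivative p), h₁, h₂]
  ring

end CommRing

section CharZero

variable {R : Type*} [CommRing R] [IsDomain R] [CharZero R] {m : ℕ} {p f : R[X]}

theorem coeff_weightedWronskian_self_ne_zero (hp : p.natDegree ≠ 0) (hf : f ≠ 0)
    (hfm : f.natDegree ≠ m) :
    (weightedWronskian m p.natDegree p f).coeff (p.natDegree + f.natDegree - 1) ≠ 0 := by
  have hp0 : p ≠ 0 := by rintro rfl; simp at hp
  have hmf : (m : R) - f.natDegree ≠ 0 := sub_ne_zero.mpr (Nat.cast_injective.ne hfm.symm)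
  rw [coeff_weightedWronskian, mul_comm (m : R), ← mul_sub]
  simp [hp, hp0, hf, hmf]

theorem natDegree_weightedWronskian_self (hp : p.natDegree ≠ 0) (hf : f ≠ 0)
    (hfm : f.natDegree ≠ m) :
    (weightedWronskian m p.natDegree p f).natDegree = p.natDegree + f.natDegree - 1 :=
  natDegree_eq_of_le_of_coeff_ne_zero (natDegree_weightedWronskian_le _ _ _ _)
    (coeff_weightedWronskian_self_ne_zero hp hf hfm)

theorem leadingCoeff_weightedWronskian_self (hp : p.natDegree ≠ 0) (hf : f ≠ 0)
    (hfm : f.natDegree ≠ m) :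
    (weightedWronskian m p.natDegree p f).leadingCoeff =
      p.natDegree * p.leadingCoeff * f.leadingCoeff * (m - f.natDegree) := by
  rw [leadingCoeff, natDegree_weightedWronskian_self hp hf hfm, coeff_weightedWronskian]
  ring

end CharZero

end Polynomial

theorem statement19_general (K : Type*) [Field K] [CharZero K] (n m k : ℕ)
    (hn : 2 ≤ n) (hk : m = n * k)
    (p q : Polynomial K) (hp : p.Monic) (hq : q.Monic)
    (hpn : p.natDegree = n) (hqm : q.natDegree = m)
    (lamt : K) (hlamt : lamt ≠ 0)
    (heq : (m : Polynomial K) * p.derivative * q - (n : Polynomial K) * p * q.derivative =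
      Polynomial.C lamt) :
    ((m : Polynomial K) * p.derivative * (q - p ^ k) -
        (n : Polynomial K) * p * (q - p ^ k).derivative = Polynomial.C lamt) ∧
    (∀ r : ℕ, (q - p ^ k) ≠ 0 → (q - p ^ k).natDegree = r → r < m →
      ((m : Polynomial K) * p.derivative * (q - p ^ k) -
          (n : Polynomial K) * p * (q - p ^ k).derivative).natDegree = n + r - 1 ∧
      ((m : Polynomial K) * p.derivative * (q - p ^ k) -
          (n : Polynomial K) * p * (q - p ^ k).derivative).leadingCoeff =
        (n : K) * (q - p ^ k).leadingCoeff * ((m : K) - (r : K))) ∧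
    False := by
  subst hpn hqm
  have hp0 : p.natDegree ≠ 0 := by omega
  have hinv : weightedWronskian q.natDegree p.natDegree p (q - p ^ k) = C lamt :=
    (weightedWronskian_sub_pow hk p q).trans heq
  have hne : q - p ^ k ≠ 0 := by
    intro h
    rw [h, weightedWronskian_zero_right] at hinv
    exact hlamt (C_eq_zero.mp hinv.symm)
  have hlt : (q - p ^ k).natDegree < q.natDegree :=
    hq.natDegree_sub_lt (hp.pow k) (by rw [hp.natDegree_pow, hk, mul_comm]) hne
  refine ⟨hinv, ?_, ?_⟩
  · rintro r - rfl hr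
    refine ⟨natDegree_weightedWronskian_self hp0 hne hr.ne, ?_⟩
    exact (leadingCoeff_weightedWronskian_self hp0 hne hr.ne).trans
      (by rw [hp.leadingCoeff, mul_one])
  · have hdeg := natDegree_weightedWronskian_self hp0 hne hlt.ne
    rw [hinv, natDegree_C] at hdeg
    omega

/-- Let `n, m ≥ 2`, `p, q` monic of degrees `n, m` with
`m p' q − n p q' = λ̃ ∈ K^×` and `m = nk`.  Setting `q̄ := q − p^k` one has
`m p' q̄ − n p q̄' = λ̃`; moreover if `q̄ ≠ 0` with `q̄ = a_r x^r + lower`,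
`0 ≤ r < m`, `a_r ≠ 0`, the leading term of `m p' q̄ − n p q̄'` is
`n a_r (m − r) x^{n+r−1}`, contradicting `n + r − 1 > 0`; hence no such pair
`(p,q)` exists. -/
theorem statement19 (K : Type*) [Field K] [CharZero K] (n m k : ℕ)
    (hn : 2 ≤ n) (hm : 2 ≤ m) (hk : m = n * k)
    (p q : Polynomial K) (hp : p.Monic) (hq : q.Monic)
    (hpn : p.natDegree = n) (hqm : q.natDegree = m)
    (lamt : K) (hlamt : lamt ≠ 0)
    (heq : (m : Polynomial K) * p.derivative * q - (n : Polynomial K) * p * q.derivative =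
      Polynomial.C lamt) :
    ((m : Polynomial K) * p.derivative * (q - p ^ k) -
        (n : Polynomial K) * p * (q - p ^ k).derivative = Polynomial.C lamt) ∧
    (∀ r : ℕ, (q - p ^ k) ≠ 0 → (q - p ^ k).natDegree = r → r < m →
      ((m : Polynomial K) * p.derivative * (q - p ^ k) -
          (n : Polynomial K) * p * (q - p ^ k).derivative).natDegree = n + r - 1 ∧
      ((m : Polynomial K) * p.derivative * (q - p ^ k) -
          (n : Polynomial K) * p * (q - p ^ k).derivative).leadingCoeff =
        (n : K) * (q - p ^ k).leadingCoeff * ((m : K) - (r : K))) ∧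
    False :=
  statement19_general K n m k hn hk p q hp hq hpn hqm lamt hlamt heq
end
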